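/- arXiv:1611.06210 — 3 statements merged into one kernel-verified Lean document; each statement's English description precedes it below -/
import Mathlib

section
/- Let s, f ∈ ℕ, E = ℝ^s, F = ℝ^f. Let P : E × F → F be twice continuously differentiable and G : E → F twice continuously differentiable near 0 ∈ E with G(0) = 0 and P(x, G(x)) = 0 for all x in a neighborhood of 0. Let L : F → F be the partial derivative of P in the second variable at (0, 0), assumed invertible as a continuous linear map, and assume the partial derivative of P in the first variable at (0, 0) vanishes: D_xP(0,0) = 0. Then DG(0) = 0 and for all u, v ∈ E, D²G(0)[u, v] = −L⁻¹ ( D²P(0, 0)[(u, 0), (v, 0)] ). -/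
theorem modal_aux {E F : Type*} [NormedAddCommGroup E] [NormedSpace ℝ E]
    [NormedAddCommGroup F] [NormedSpace ℝ F]
    (P : E × F → F) (G : E → F)
    (hP : ContDiff ℝ 2 P)
    (hG : ContDiffAt ℝ 2 G 0)
    (hG0 : G 0 = 0)
    (hzero : ∀ᶠ x in nhds (0 : E), P (x, G x) = 0)
    (L : F ≃L[ℝ] F)
    (hL : (L : F →L[ℝ] F) = (fderiv ℝ P (0, 0)).comp (ContinuousLinearMap.inr ℝ E F))
    (hDx : (fderiv ℝ P (0, 0)).comp (ContinuousLinearMap.inl ℝ E F) = 0) :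
    fderiv ℝ G 0 = 0 ∧
    ∀ u v : E, fderiv ℝ (fderiv ℝ G) 0 u v =
        -L.symm (fderiv ℝ (fderiv ℝ P) (0, 0) (u, 0) (v, 0)) := by
  have h00 : ((0 : E), G 0) = ((0 : E), (0 : F)) := by rw [hG0]
  -- eventual differentiability of G
  have hGev : ∀ᶠ x in nhds (0 : E), ContDiffAt ℝ 2 G x := hG.eventually (by norm_num)
  have hGdiff : ∀ᶠ x in nhds (0 : E), DifferentiableAt ℝ G x :=
    hGev.mono fun x hx => hx.differentiableAt (by norm_num)
  have hPdiff : Differentiable ℝ P := hP.differentiable (by norm_num)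
  -- the composed map and its derivative
  have hH1 : ∀ᶠ x in nhds (0 : E), fderiv ℝ (fun x => P (x, G x)) x
      = (fderiv ℝ P (x, G x)).comp ((ContinuousLinearMap.id ℝ E).prod (fderiv ℝ G x)) := by
    filter_upwards [hGdiff] with x hx
    have hφ : HasFDerivAt (fun x : E => (x, G x))
        ((ContinuousLinearMap.id ℝ E).prod (fderiv ℝ G x)) x :=
      (hasFDerivAt_id x).prodMk hx.hasFDerivAt
    exact ((hPdiff (x, G x)).hasFDerivAt.comp x hφ).fderiv
  have hHzero : fderiv ℝ (fun x : E => P (x, G x)) =ᶠ[nhds 0] fun _ => 0 := by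
    have h1 : (fun x : E => P (x, G x)) =ᶠ[nhds 0] fun _ => (0 : F) := hzero
    have h2 := Filter.EventuallyEq.fderiv (𝕜 := ℝ) h1
    rw [fderiv_fun_const] at h2
    exact h2
  have hF1zero : ∀ᶠ x in nhds (0 : E),
      (fderiv ℝ P (x, G x)).comp ((ContinuousLinearMap.id ℝ E).prod (fderiv ℝ G x))
        = 0 := by
    filter_upwards [hH1, hHzero] with x h1 h2
    rw [← h1, h2]
  -- first derivative of G vanishes
  have hg0 : fderiv ℝ G 0 = 0 := by
    have h0 := hF1zero.self_of_nhds
    rw [h00] at h0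
    ext v
    have hv := congrFun (congrArg (fun (T : E →L[ℝ] F) => (T : E → F)) h0) v
    simp only [ContinuousLinearMap.comp_apply, ContinuousLinearMap.prod_apply,
      ContinuousLinearMap.id_apply, ContinuousLinearMap.zero_apply] at hv
    have hsplit : ((v : E), fderiv ℝ G 0 v)
        = (ContinuousLinearMap.inl ℝ E F) v + (ContinuousLinearMap.inr ℝ E F) (fderiv ℝ G 0 v) := by
      simp
    rw [hsplit, map_add] at hv
    have hx0 : fderiv ℝ P (0, 0) ((ContinuousLinearMap.inl ℝ E F) v) = 0 := by
      have := congrFun (congrArg (fun (T : E →L[ℝ] F) => (T : E → F)) hDx) v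
      simpa using this
    have hLy : fderiv ℝ P (0, 0) ((ContinuousLinearMap.inr ℝ E F) (fderiv ℝ G 0 v))
        = L (fderiv ℝ G 0 v) := by
      have := congrFun (congrArg (fun (T : F →L[ℝ] F) => (T : F → F)) hL) (fderiv ℝ G 0 v)
      simpa using this.symm
    rw [hx0, hLy, zero_add] at hv
    have h2 : fderiv ℝ G 0 v = 0 := by
      have := congrArg L.symm hv
      simpa using this
    simp [h2]
  refine ⟨hg0, ?_⟩
  set g := fderiv ℝ G with hg
  set g2 := fderiv ℝ g 0 with hg2
  set C := (ContinuousLinearMap.compL ℝ E F (E × F)) (ContinuousLinearMap.inr ℝ E F) with hC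
  -- derivative of k x = fderiv P (x, G x) at 0
  have hφ0 : HasFDerivAt (fun x : E => (x, G x))
      ((ContinuousLinearMap.id ℝ E).prod (0 : E →L[ℝ] F)) 0 := by
    have := (hasFDerivAt_id (0 : E)).prodMk (hGdiff.self_of_nhds.hasFDerivAt)
    rwa [← hg, hg0] at this
  have hfP : ContDiff ℝ 1 (fderiv ℝ P) := hP.fderiv_right (by norm_num)
  have hk : HasFDerivAt (fun x : E => fderiv ℝ P (x, G x))
      ((fderiv ℝ (fderiv ℝ P) (0, 0)).comp
        ((ContinuousLinearMap.id ℝ E).prod (0 : E →L[ℝ] F))) 0 := by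
    have hd : HasFDerivAt (fderiv ℝ P) (fderiv ℝ (fderiv ℝ P) ((0 : E), (0 : F))) ((0 : E), G 0) := by
      rw [h00]
      exact ((hfP.differentiable one_ne_zero) ((0 : E), (0 : F))).hasFDerivAt
    exact hd.comp 0 hφ0
  -- derivative of a x = id.prod (g x) at 0
  have ha_eq : (fun x : E => (ContinuousLinearMap.id ℝ E).prod (g x))
      = fun x : E => ContinuousLinearMap.inl ℝ E F + C (g x) := by
    funext x
    ext v <;> simp [hC]
  have hgdiff0 : HasFDerivAt g g2 0 := by
    have h1 : ContDiffAt ℝ 1 g 0 := hG.fderiv_right (m := 1) (by norm_num)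
    exact (h1.differentiableAt one_ne_zero).hasFDerivAt
  have ha : HasFDerivAt (fun x : E => (ContinuousLinearMap.id ℝ E).prod (g x))
      (C.comp g2) 0 := by
    rw [ha_eq]
    exact (C.hasFDerivAt.comp 0 hgdiff0).const_add _
  -- combine: derivative of F1 at 0 is 0
  have hF1 := hk.clm_comp ha
  have hDzero : fderiv ℝ (fun x : E =>
      (fderiv ℝ P (x, G x)).comp ((ContinuousLinearMap.id ℝ E).prod (g x))) 0 = 0 := by
    have h1 : (fun x : E =>
        (fderiv ℝ P (x, G x)).comp ((ContinuousLinearMap.id ℝ E).prod (g x)))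
        =ᶠ[nhds 0] fun _ => (0 : E →L[ℝ] F) := hF1zero
    rw [h1.fderiv_eq]
    simp
  have hD := hF1.fderiv
  rw [hDzero] at hD
  intro u v
  have huv := congrFun (congrArg (fun (T : E →L[ℝ] F) => (T : E → F))
    (congrFun (congrArg (fun (T : E →L[ℝ] (E →L[ℝ] F)) => (T : E → E →L[ℝ] F)) hD.symm) u)) v
  simp only [ContinuousLinearMap.zero_apply, ContinuousLinearMap.add_apply,
    ContinuousLinearMap.comp_apply, ContinuousLinearMap.compL_apply,
    ContinuousLinearMap.flip_apply, ContinuousLinearMap.prod_apply,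
    ContinuousLinearMap.id_apply, hC] at huv
  rw [h00] at huv
  have hLy : fderiv ℝ P ((0 : E), (0 : F)) ((ContinuousLinearMap.inr ℝ E F) (g2 u v))
      = L (g2 u v) := by
    have := congrFun (congrArg (fun (T : F →L[ℝ] F) => (T : F → F)) hL) (g2 u v)
    simpa using this.symm
  rw [hLy] at huv
  rw [hg0] at huv
  simp only [ContinuousLinearMap.zero_apply] at huv
  have h3 : L (g2 u v) = -(fderiv ℝ (fderiv ℝ P) ((0 : E), (0 : F)) (u, 0) (v, 0)) :=
    eq_neg_of_add_eq_zero_left huv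
  have h4 := congrArg L.symm h3
  simpa using h4

/-- Modal-derivative formula: if `P` and `G` are twice continuously differentiable near
`0` with `G 0 = 0` and `P(x, G x) = 0` near `0`, the partial derivative `L` of `P` in the
second variable at `(0, 0)` is invertible, and the partial derivative of `P` in the first
variable at `(0, 0)` vanishes, then `DG(0) = 0` and for all `u v`,
`D²G(0)[u, v] = −L⁻¹ ( D²P(0, 0)[(u, 0), (v, 0)] )`.
This corresponds to `Γ = 0`, `Φ = 0`, `Θ = −(1/2)[∂_ηP₂]⁻¹ ∂²ₓₓP₂`, the modal
derivative tensor. -/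
theorem modal_derivative_formula (s f : ℕ)
    (P : (EuclideanSpace ℝ (Fin s)) × (EuclideanSpace ℝ (Fin f)) → EuclideanSpace ℝ (Fin f))
    (G : EuclideanSpace ℝ (Fin s) → EuclideanSpace ℝ (Fin f))
    (hP : ContDiff ℝ 2 P)
    (hG : ContDiffAt ℝ 2 G 0)
    (hG0 : G 0 = 0)
    (hzero : ∀ᶠ x in nhds (0 : EuclideanSpace ℝ (Fin s)), P (x, G x) = 0)
    (L : EuclideanSpace ℝ (Fin f) ≃L[ℝ] EuclideanSpace ℝ (Fin f))
    (hL : (L : EuclideanSpace ℝ (Fin f) →L[ℝ] EuclideanSpace ℝ (Fin f))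
      = (fderiv ℝ P (0, 0)).comp (ContinuousLinearMap.inr ℝ
          (EuclideanSpace ℝ (Fin s)) (EuclideanSpace ℝ (Fin f))))
    (hDx : (fderiv ℝ P (0, 0)).comp (ContinuousLinearMap.inl ℝ
        (EuclideanSpace ℝ (Fin s)) (EuclideanSpace ℝ (Fin f))) = 0) :
    fderiv ℝ G 0 = 0 ∧
    ∀ u v : EuclideanSpace ℝ (Fin s),
      fderiv ℝ (fderiv ℝ G) 0 u v =
        -L.symm (fderiv ℝ (fderiv ℝ P) (0, 0) (u, 0) (v, 0)) := by
  exact modal_aux P G hP hG hG0 hzero L hL hDx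
end

section
/- Let a, b, c, k₁, k₂ ∈ ℝ with a·c ≠ 0, k₁ ≠ 0, k₂ ≠ 0 and k₂ ≠ 4k₁. Then b − a·c·(2k₁ − k₂)/(k₂(4k₁ − k₂)) ≠ b − a·c/k₂. In other words, the cubic coefficient of the exact conservative reduced model differs from the cubic coefficient produced by the modal-derivatives reduction whenever a ≠ 0 and c ≠ 0. -/
/-- The cubic coefficient `b − ac(2k₁ − k₂)/(k₂(4k₁ − k₂))` of the exact conservative
reduced model differs from the cubic coefficient `b − ac/k₂` produced by the
modal-derivatives reduction whenever `ac ≠ 0`, `k₁ ≠ 0`, `k₂ ≠ 0` and `k₂ ≠ 4k₁`. -/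
theorem modal_derivatives_cubic_coefficient_incorrect (a b c k₁ k₂ : ℝ)
    (hac : a * c ≠ 0) (hk₁ : k₁ ≠ 0) (hk₂ : k₂ ≠ 0) (hres : k₂ ≠ 4 * k₁) :
    b - a * c * (2 * k₁ - k₂) / (k₂ * (4 * k₁ - k₂)) ≠ b - a * c / k₂ := by
  have hd : 4 * k₁ - k₂ ≠ 0 := fun h => hres (by linarith)
  intro h
  have h' : a * c * (2 * k₁ - k₂) / (k₂ * (4 * k₁ - k₂)) = a * c / k₂ := by linarith
  field_simp at h'
  have hz : a * c * k₂ * (2 * k₁) = 0 := by rw [div_eq_iff (by rwa [mul_comm] at hd)] at h'; linear_combination -k₂ * h'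
  rcases mul_eq_zero.mp hz with h0 | h0
  · rcases mul_eq_zero.mp h0 with h1 | h1
    · exact hac h1
    · exact hk₂ h1
  · exact hk₁ (by linarith)
end

section
/- Let c₁, c₂, k₁, k₂, c ∈ ℝ with k₂ ≠ 0. For ε > 0, let α(ε), β(ε), γ(ε) denote the expressions obtained from the formulas for α, β, γ (and D) by replacing c₂ with c₂/ε and k₂ with k₂/ε². Then, as ε → 0⁺, α(ε)/ε² tends to −c/k₂, β(ε)/ε² tends to 0, and γ(ε)/ε² tends to 0. -/
set_option maxHeartbeats 1600000 in
/-- Under the slow–fast scaling `c₂ → c₂/ε`, `k₂ → k₂/ε²` of the slow-SSM coefficient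
formulas, as `ε → 0⁺` one has `α(ε)/ε² → −c/k₂`, `β(ε)/ε² → 0` and `γ(ε)/ε² → 0`,
i.e. `α = −(c/k₂)ε² + O(ε³)`, `β = O(ε³)`, `γ = O(ε³)`. -/
theorem ssm_coefficients_slow_fast_scaling (c₁ c₂ k₁ k₂ c : ℝ) (hk₂ : k₂ ≠ 0)
    (D α β γ : ℝ → ℝ)
    (hD : ∀ ε : ℝ, D ε = (c₁ ^ 2 - c₁ * (c₂ / ε) + k₂ / ε ^ 2) *
      (4 * c₁ ^ 2 * (k₂ / ε ^ 2) - 8 * c₁ * (c₂ / ε) * k₁ - 2 * c₁ * (c₂ / ε) * (k₂ / ε ^ 2)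
        + 4 * (c₂ / ε) ^ 2 * k₁ + 16 * k₁ ^ 2 - 8 * k₁ * (k₂ / ε ^ 2) + (k₂ / ε ^ 2) ^ 2))
    (hα : ∀ ε : ℝ, α ε = -(c / D ε) * (4 * c₁ ^ 4 - 6 * c₁ ^ 3 * (c₂ / ε)
      + 2 * c₁ ^ 2 * (c₂ / ε) ^ 2 + 5 * c₁ ^ 2 * (k₂ / ε ^ 2)
      - c₁ * (c₂ / ε) * (2 * k₁ + 3 * (k₂ / ε ^ 2)) + 2 * (c₂ / ε) ^ 2 * k₁
      + 8 * k₁ ^ 2 - 6 * k₁ * (k₂ / ε ^ 2) + (k₂ / ε ^ 2) ^ 2))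
    (hβ : ∀ ε : ℝ, β ε = -(2 * c / D ε) * (4 * c₁ * k₁ + (k₂ / ε ^ 2) * (c₁ - c₂ / ε)
      + 2 * c₁ * (c₂ / ε) ^ 2 - 6 * c₁ ^ 2 * (c₂ / ε) + 4 * c₁ ^ 3))
    (hγ : ∀ ε : ℝ, γ ε = -(2 * c / D ε) * (2 * c₁ ^ 2 - 3 * c₁ * (c₂ / ε)
      + (c₂ / ε) ^ 2 + 4 * k₁ - k₂ / ε ^ 2)) :
    Filter.Tendsto (fun ε : ℝ => α ε / ε ^ 2) (nhdsWithin 0 (Set.Ioi 0))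
      (nhds (-c / k₂)) ∧
    Filter.Tendsto (fun ε : ℝ => β ε / ε ^ 2) (nhdsWithin 0 (Set.Ioi 0)) (nhds 0) ∧
    Filter.Tendsto (fun ε : ℝ => γ ε / ε ^ 2) (nhdsWithin 0 (Set.Ioi 0)) (nhds 0) := by
  set P : ℝ → ℝ := fun ε =>
    (c₁ ^ 2 * ε ^ 2 - c₁ * c₂ * ε + k₂) *
    (4 * c₁ ^ 2 * k₂ * ε ^ 2 - 8 * c₁ * c₂ * k₁ * ε ^ 3 - 2 * c₁ * c₂ * k₂ * ε
      + 4 * c₂ ^ 2 * k₁ * ε ^ 2 + 16 * k₁ ^ 2 * ε ^ 4 - 8 * k₁ * k₂ * ε ^ 2 + k₂ ^ 2)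
    with hPdef
  set Nα : ℝ → ℝ := fun ε => 4 * c₁ ^ 4 * ε ^ 4 - 6 * c₁ ^ 3 * c₂ * ε ^ 3
    + 2 * c₁ ^ 2 * c₂ ^ 2 * ε ^ 2 + 5 * c₁ ^ 2 * k₂ * ε ^ 2 - 2 * c₁ * c₂ * k₁ * ε ^ 3
    - 3 * c₁ * c₂ * k₂ * ε + 2 * c₂ ^ 2 * k₁ * ε ^ 2 + 8 * k₁ ^ 2 * ε ^ 4
    - 6 * k₁ * k₂ * ε ^ 2 + k₂ ^ 2 with hNαdef
  set Nβ : ℝ → ℝ := fun ε => 4 * c₁ * k₁ * ε ^ 3 + c₁ * k₂ * ε - c₂ * k₂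
    + 2 * c₁ * c₂ ^ 2 * ε - 6 * c₁ ^ 2 * c₂ * ε ^ 2 + 4 * c₁ ^ 3 * ε ^ 3 with hNβdef
  set Nγ : ℝ → ℝ := fun ε => 2 * c₁ ^ 2 * ε ^ 2 - 3 * c₁ * c₂ * ε + c₂ ^ 2
    + 4 * k₁ * ε ^ 2 - k₂ with hNγdef
  have hP0 : P 0 = k₂ ^ 3 := by simp [hPdef]; ring
  have hPcont : Continuous P := by fun_prop
  have hP0ne : P 0 ≠ 0 := by rw [hP0]; exact pow_ne_zero 3 hk₂
  have hPne : ∀ᶠ ε in nhdsWithin (0:ℝ) (Set.Ioi 0), P ε ≠ 0 :=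
    ((hPcont.continuousAt.eventually_ne hP0ne).filter_mono nhdsWithin_le_nhds)
  have hεne : ∀ᶠ ε in nhdsWithin (0:ℝ) (Set.Ioi 0), ε ≠ 0 :=
    eventually_mem_nhdsWithin.mono fun x hx => ne_of_gt hx
  have hDP : ∀ ε : ℝ, ε ≠ 0 → D ε = P ε / ε ^ 6 := by
    intro ε hε
    rw [hD ε, hPdef]
    field_simp
  constructor
  · have key : ∀ᶠ ε in nhdsWithin (0:ℝ) (Set.Ioi 0),
        -c * Nα ε / P ε = α ε / ε ^ 2 := by
      filter_upwards [hPne, hεne] with ε hPε hε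
      rw [hα ε, hDP ε hε, hNαdef]
      field_simp
      ring
    refine Filter.Tendsto.congr' key ?_
    have hc : ContinuousAt (fun ε => -c * Nα ε / P ε) 0 :=
      ContinuousAt.div (by fun_prop) hPcont.continuousAt hP0ne
    have hv : -c * Nα 0 / P 0 = -c / k₂ := by
      rw [hP0]; simp [hNαdef]
      field_simp
    have h := hc.tendsto.mono_left (nhdsWithin_le_nhds (s := Set.Ioi (0:ℝ)))
    rwa [hv] at h
  constructor
  · have key : ∀ᶠ ε in nhdsWithin (0:ℝ) (Set.Ioi 0),
        -2 * c * Nβ ε * ε / P ε = β ε / ε ^ 2 := by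
      filter_upwards [hPne, hεne] with ε hPε hε
      rw [hβ ε, hDP ε hε, hNβdef]
      field_simp
      ring
    refine Filter.Tendsto.congr' key ?_
    have hc : ContinuousAt (fun ε => -2 * c * Nβ ε * ε / P ε) 0 :=
      ContinuousAt.div (by fun_prop) hPcont.continuousAt hP0ne
    have hv : -2 * c * Nβ 0 * 0 / P 0 = 0 := by simp
    have h := hc.tendsto.mono_left (nhdsWithin_le_nhds (s := Set.Ioi (0:ℝ)))
    rwa [hv] at h
  · have key : ∀ᶠ ε in nhdsWithin (0:ℝ) (Set.Ioi 0),
        -2 * c * Nγ ε * ε ^ 2 / P ε = γ ε / ε ^ 2 := by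
      filter_upwards [hPne, hεne] with ε hPε hε
      rw [hγ ε, hDP ε hε, hNγdef]
      field_simp
    refine Filter.Tendsto.congr' key ?_
    have hc : ContinuousAt (fun ε => -2 * c * Nγ ε * ε ^ 2 / P ε) 0 :=
      ContinuousAt.div (by fun_prop) hPcont.continuousAt hP0ne
    have hv : -2 * c * Nγ 0 * 0 ^ 2 / P 0 = 0 := by simp
    have h := hc.tendsto.mono_left (nhdsWithin_le_nhds (s := Set.Ioi (0:ℝ)))
    rwa [hv] at h
end
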